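/- Let n ≥ 3, M be positive integers with gcd(n,3) = 1, n even, v₂(n) ∉ {2, 1 + v₂(M)}, and suppose M³(n-1)²(n+4)⁴A⁷/(54·n⁴(n+1)²·R(n,M)) is a nonzero integer, where A = 6M - n(n+1)(n+5) and R(n,M) is the explicit degree-6 polynomial in M. Then n divides M. -/

import Mathlib

private lemma exact_mul {p : ℤ} (hp : Prime p) {a b : ℕ} {x y : ℤ}
    (hx : p^a ∣ x) (hx' : ¬ p^(a+1) ∣ x) (hy : p^b ∣ y) (hy' : ¬ p^(b+1) ∣ y) :
    p^(a+b) ∣ x*y ∧ ¬ p^(a+b+1) ∣ x*y := by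
  obtain ⟨x', rfl⟩ := hx
  obtain ⟨y', rfl⟩ := hy
  have hpx : ¬ p ∣ x' := fun ⟨c, hc⟩ => hx' ⟨c, by rw [hc]; ring⟩
  have hpy : ¬ p ∣ y' := fun ⟨c, hc⟩ => hy' ⟨c, by rw [hc]; ring⟩
  refine ⟨⟨x'*y', by ring⟩, fun ⟨c, hc⟩ => ?_⟩
  have hcc : x'*y' = p*c := by
    have hne : (p:ℤ)^(a+b) ≠ 0 := pow_ne_zero _ hp.ne_zero
    apply mul_left_cancel₀ hne
    linear_combination hc
  rcases hp.dvd_mul.mp ⟨c, hcc⟩ with h | h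
  exacts [hpx h, hpy h]

private lemma exact_pow {p x : ℤ} (hp : Prime p) {a : ℕ}
    (h1 : p^a ∣ x) (h2 : ¬ p^(a+1) ∣ x) :
    ∀ k : ℕ, p^(a*k) ∣ x^k ∧ ¬ p^(a*k+1) ∣ x^k
  | 0 => ⟨by simp, by simpa using hp.not_dvd_one⟩
  | (k+1) => by
    obtain ⟨ih1, ih2⟩ := exact_pow hp h1 h2 k
    have h := exact_mul hp ih1 ih2 h1 h2
    constructor
    · rw [show a*(k+1) = a*k + a from by ring, pow_succ]; exact h.1
    · rw [show a*(k+1)+1 = a*k+a+1 from by ring, pow_succ x k]; exact h.2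

private lemma dvd5 {p : ℤ} {k a₁ a₂ a₃ a₄ a₅ : ℕ} {x₁ x₂ x₃ x₄ x₅ z : ℤ} (w : ℤ)
    (h₁ : p^a₁ ∣ x₁) (h₂ : p^a₂ ∣ x₂) (h₃ : p^a₃ ∣ x₃) (h₄ : p^a₄ ∣ x₄) (h₅ : p^a₅ ∣ x₅)
    (hz : z = x₁*x₂*x₃*x₄*x₅*w) (hk : k ≤ a₁+a₂+a₃+a₄+a₅) : p^k ∣ z := by
  subst hz
  refine (pow_dvd_pow p hk).trans ?_
  have h : p^(a₁+a₂+a₃+a₄+a₅) ∣ x₁*x₂*x₃*x₄*x₅ := by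
    rw [pow_add, pow_add, pow_add, pow_add]
    exact mul_dvd_mul (mul_dvd_mul (mul_dvd_mul (mul_dvd_mul h₁ h₂) h₃) h₄) h₅
  exact h.mul_right w

private lemma pdvd {p z : ℤ} {c : ℕ} (h : p^c ∣ z) (j : ℕ) : p^(c*j) ∣ z^j := by
  rw [pow_mul]; exact pow_dvd_pow_of_dvd h j

set_option maxHeartbeats 1000000 in
/-- The contradiction for odd primes `p ∤ 6` with `v_p(M) < v_p(n)`. -/
private lemma case_odd {p n M A R : ℤ} (hp : Prime p) (hp6 : ¬ p ∣ 6) {f : ℕ}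
    (hfM : p^f ∣ M) (hfM' : ¬ p^(f+1) ∣ M) (hn1 : p^(f+1) ∣ n)
    (hA : A = 6*M - n*(n+1)*(n+5))
    (hR : R = 2^14*3^6*M^6 - 2^13*3^7*n*(n+1)*(n+3)*M^5 + 2^9*3^5*n^2*(n+1)*(n^4+93*n^3+629*n^2+1339*n+818)*M^4 - 2^7*3^4*n^3*(n+1)^2*(13*n^5+436*n^4+3688*n^3+12782*n^2+19163*n+9998)*M^3 + 2^2*3^3*n^4*(n+1)^3*(n+2)*(n+7)^2*(5*n^4+447*n^3+3303*n^2+7873*n+5652)*M^2 - 2^2*3^3*n^5*(n+1)^4*(n+2)^2*(n+5)^2*(n+7)^3*(3*n+5)*M + n^6*(n+1)^5*(n+2)^3*(n+5)^3*(n+7)^4)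
    (hdvd : 54*n^4*(n+1)^2*R ∣ M^3*(n-1)^2*(n+4)^4*A^7) : False := by
  have h01 : p^0 ∣ (1:ℤ) := ⟨1, by ring⟩
  have hpn : p ∣ n := (dvd_pow_self p (Nat.succ_ne_zero f)).trans hn1
  have hp2 : ¬ p ∣ 2 := fun h => hp6 (h.trans ⟨3, by norm_num⟩)
  -- R is divisible by p^(6f)
  have hRdvd : p^(6*f) ∣ R := by
    rw [hR]
    refine dvd_add (dvd_sub (dvd_add (dvd_sub (dvd_add (dvd_sub ?_ ?_) ?_) ?_) ?_) ?_) ?_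
    · exact dvd5 (2^14*3^6) (pdvd hfM 6) h01 h01 h01 h01 (by ring) (by clear * - hfM; omega)
    · exact dvd5 (2^13*3^7*(n+1)*(n+3)) hn1 (pdvd hfM 5) h01 h01 h01 (by ring) (by clear * - hfM; omega)
    · exact dvd5 (2^9*3^5*(n+1)*(n^4+93*n^3+629*n^2+1339*n+818)) (pdvd hn1 2) (pdvd hfM 4)
        h01 h01 h01 (by ring) (by clear * - hfM; omega)
    · exact dvd5 (2^7*3^4*(n+1)^2*(13*n^5+436*n^4+3688*n^3+12782*n^2+19163*n+9998)) (pdvd hn1 3)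
        (pdvd hfM 3) h01 h01 h01 (by ring) (by clear * - hfM; omega)
    · exact dvd5 (2^2*3^3*(n+1)^3*(n+2)*(n+7)^2*(5*n^4+447*n^3+3303*n^2+7873*n+5652)) (pdvd hn1 4)
        (pdvd hfM 2) h01 h01 h01 (by ring) (by clear * - hfM; omega)
    · exact dvd5 (2^2*3^3*(n+1)^4*(n+2)^2*(n+5)^2*(n+7)^3*(3*n+5)) (pdvd hn1 5) hfM
        h01 h01 h01 (by ring) (by clear * - hfM; omega)
    · exact dvd5 ((n+1)^5*(n+2)^3*(n+5)^3*(n+7)^4) (pdvd hn1 6) h01 h01 h01 h01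
        (by ring) (by clear * - hfM; omega)
  -- D is divisible by p^(10f+1)
  have hD : p^(10*f+1) ∣ 54*n^4*(n+1)^2*R :=
    dvd5 (54*(n+1)^2) (pdvd hn1 4) hRdvd h01 h01 h01 (by ring) (by clear * - hfM; omega)
  -- exact valuations on the numerator side
  have hM3 := exact_pow hp hfM hfM' 3
  have hn1' : ¬ p ∣ (n - 1) := fun h => hp.not_dvd_one (by
    have h1 := dvd_sub hpn h; simpa using h1)
  have hEn1 : p^0 ∣ (n-1) ∧ ¬ p^(0+1) ∣ (n-1) := ⟨⟨n-1, by ring⟩, by simpa using hn1'⟩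
  have hn4' : ¬ p ∣ (n + 4) := by
    intro h
    have h4 : p ∣ 4 := by have h1 := dvd_sub h hpn; simpa using h1
    exact hp2 (hp.dvd_of_dvd_pow (show p ∣ (2:ℤ)^2 by norm_num [h4]))
  have hEn4 : p^0 ∣ (n+4) ∧ ¬ p^(0+1) ∣ (n+4) := ⟨⟨n+4, by ring⟩, by simpa using hn4'⟩
  have hAex : p^f ∣ A ∧ ¬ p^(f+1) ∣ A := by
    constructor
    · rw [hA]
      refine dvd_sub (hfM.mul_left 6) ?_
      exact ((((pow_dvd_pow p (Nat.le_succ f)).trans hn1).mul_right (n+1)).mul_right (n+5))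
    · intro h
      have hnp : p^(f+1) ∣ n*(n+1)*(n+5) := (hn1.mul_right (n+1)).mul_right (n+5)
      have h6M : p^(f+1) ∣ 6*M := by
        have e : 6*M = A + n*(n+1)*(n+5) := by rw [hA]; ring
        rw [e]; exact dvd_add h hnp
      exact hfM' (hp.pow_dvd_of_dvd_mul_left _ hp6 h6M)
  have E2 := exact_pow hp hEn1.1 hEn1.2 2
  have E4 := exact_pow hp hEn4.1 hEn4.2 4
  have E7 := exact_pow hp hAex.1 hAex.2 7
  have C1 := exact_mul hp hM3.1 hM3.2 E2.1 E2.2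
  have C2 := exact_mul hp C1.1 C1.2 E4.1 E4.2
  have C3 := exact_mul hp C2.1 C2.2 E7.1 E7.2
  exact C3.2 ((pow_dvd_pow p (by clear * - hfM; omega)).trans (hD.trans hdvd))

set_option maxHeartbeats 1000000 in
/-- The contradiction for `p = 2` with `v₂(M)+2 ≤ v₂(n)`, `3 ≤ v₂(n)`. -/
private lemma case_two {n M A R : ℤ} {f m : ℕ} (hm3 : 3 ≤ m) (hmf : f+2 ≤ m)
    (hfM : (2:ℤ)^f ∣ M) (hfM' : ¬ (2:ℤ)^(f+1) ∣ M) (hmn : (2:ℤ)^m ∣ n)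
    (hA : A = 6*M - n*(n+1)*(n+5))
    (hR : R = 2^14*3^6*M^6 - 2^13*3^7*n*(n+1)*(n+3)*M^5 + 2^9*3^5*n^2*(n+1)*(n^4+93*n^3+629*n^2+1339*n+818)*M^4 - 2^7*3^4*n^3*(n+1)^2*(13*n^5+436*n^4+3688*n^3+12782*n^2+19163*n+9998)*M^3 + 2^2*3^3*n^4*(n+1)^3*(n+2)*(n+7)^2*(5*n^4+447*n^3+3303*n^2+7873*n+5652)*M^2 - 2^2*3^3*n^5*(n+1)^4*(n+2)^2*(n+5)^2*(n+7)^3*(3*n+5)*M + n^6*(n+1)^5*(n+2)^3*(n+5)^3*(n+7)^4)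
    (hdvd : 54*n^4*(n+1)^2*R ∣ M^3*(n-1)^2*(n+4)^4*A^7) : False := by
  have hp : Prime (2:ℤ) := Int.prime_two
  have h01 : (2:ℤ)^0 ∣ (1:ℤ) := ⟨1, by ring⟩
  obtain ⟨t, ht⟩ : (8:ℤ) ∣ n := by
    have h8 : (2:ℤ)^3 ∣ n := (pow_dvd_pow 2 hm3).trans hmn
    simpa using h8
  have hP : (2:ℤ)^1 ∣ (n^4+93*n^3+629*n^2+1339*n+818) :=
    ⟨2048*t^4+23808*t^3+20128*t^2+5356*t+409, by rw [ht]; ring⟩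
  have hQ : (2:ℤ)^1 ∣ (13*n^5+436*n^4+3688*n^3+12782*n^2+19163*n+9998) :=
    ⟨212992*t^5+892928*t^4+944128*t^3+409024*t^2+76652*t+4999, by rw [ht]; ring⟩
  have hS : (2:ℤ)^2 ∣ (5*n^4+447*n^3+3303*n^2+7873*n+5652) :=
    ⟨5120*t^4+57216*t^3+52848*t^2+15746*t+1413, by rw [ht]; ring⟩
  have h2n2 : (2:ℤ)^1 ∣ (n+2) := ⟨4*t+1, by rw [ht]; ring⟩
  -- R is divisible by 2^(13+6f)
  have hRdvd : (2:ℤ)^(13+6*f) ∣ R := by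
    rw [hR]
    refine dvd_add (dvd_sub (dvd_add (dvd_sub (dvd_add (dvd_sub ?_ ?_) ?_) ?_) ?_) ?_) ?_
    · exact dvd5 (3^6) (dvd_refl ((2:ℤ)^14)) (pdvd hfM 6) h01 h01 h01 (by ring) (by clear * - hmf hm3; omega)
    · exact dvd5 (3^7*(n+1)*(n+3)) (dvd_refl ((2:ℤ)^13)) hmn (pdvd hfM 5) h01 h01
        (by ring) (by clear * - hmf hm3; omega)
    · exact dvd5 (3^5*(n+1)) (dvd_refl ((2:ℤ)^9)) (pdvd hmn 2) hP (pdvd hfM 4) h01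
        (by ring) (by clear * - hmf hm3; omega)
    · exact dvd5 (3^4*(n+1)^2) (dvd_refl ((2:ℤ)^7)) (pdvd hmn 3) hQ (pdvd hfM 3) h01
        (by ring) (by clear * - hmf hm3; omega)
    · exact dvd5 (3^3*(n+1)^3*(n+7)^2) (dvd_refl ((2:ℤ)^2)) (pdvd hmn 4) h2n2 hS (pdvd hfM 2)
        (by ring) (by clear * - hmf hm3; omega)
    · exact dvd5 (3^3*(n+1)^4*(n+5)^2*(n+7)^3*(3*n+5)) (dvd_refl ((2:ℤ)^2)) (pdvd hmn 5)
        (pdvd h2n2 2) hfM h01 (by ring) (by clear * - hmf hm3; omega)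
    · exact dvd5 ((n+1)^5*(n+5)^3*(n+7)^4) (pdvd hmn 6) (pdvd h2n2 3) h01 h01 h01
        (by ring) (by clear * - hmf hm3; omega)
  -- D is divisible by 2^(10f+16)
  have hD : (2:ℤ)^(10*f+16) ∣ 54*n^4*(n+1)^2*R := by
    refine dvd5 ((n+1)^2) (show (2:ℤ)^1 ∣ 54 from ⟨27, by norm_num⟩) (pdvd hmn 4) hRdvd
      h01 h01 (by ring) (by clear * - hmf hm3; omega)
  -- exact valuations on the numerator side
  have hM3 := exact_pow hp hfM hfM' 3
  have hEn1 : (2:ℤ)^0 ∣ (n-1) ∧ ¬ (2:ℤ)^(0+1) ∣ (n-1) := by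
    refine ⟨⟨n-1, by ring⟩, ?_⟩
    rw [ht]; intro hc
    have h2 : (2:ℤ) ∣ 8*t - 1 := by simpa using hc
    clear * - h2; omega
  have hEn4 : (2:ℤ)^2 ∣ (n+4) ∧ ¬ (2:ℤ)^(2+1) ∣ (n+4) := by
    constructor
    · exact ⟨2*t+1, by rw [ht]; ring⟩
    · rw [ht]; intro hc
      have h2 : (8:ℤ) ∣ 8*t + 4 := by simpa using hc
      clear * - h2; omega
  have hAex : (2:ℤ)^(f+1) ∣ A ∧ ¬ (2:ℤ)^(f+1+1) ∣ A := by
    obtain ⟨M₁, hM₁⟩ := hfM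
    constructor
    · rw [hA]
      refine dvd_sub ⟨3*M₁, by rw [hM₁]; ring⟩ ?_
      exact (((pow_dvd_pow 2 (show f+1 ≤ m by clear * - hmf; omega)).trans hmn).mul_right (n+1)).mul_right (n+5)
    · intro h
      have hnp : (2:ℤ)^(f+2) ∣ n*(n+1)*(n+5) :=
        (((pow_dvd_pow 2 hmf).trans hmn).mul_right (n+1)).mul_right (n+5)
      have h6M : (2:ℤ)^(f+2) ∣ 6*M := by
        have e : 6*M = A + n*(n+1)*(n+5) := by rw [hA]; ring
        rw [e]
        exact dvd_add (by simpa using h) hnp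
      obtain ⟨c, hc⟩ := h6M
      have h3M : (2:ℤ)^(f+1) ∣ 3*M := by
        refine ⟨c, ?_⟩
        have h2 : (2:ℤ) * (3*M) = 2 * ((2:ℤ)^(f+1)*c) := by linear_combination hc
        exact mul_left_cancel₀ two_ne_zero h2
      exact hfM' (hp.pow_dvd_of_dvd_mul_left _ (by norm_num) h3M)
  have E2 := exact_pow hp hEn1.1 hEn1.2 2
  have E4 := exact_pow hp hEn4.1 hEn4.2 4
  have E7 := exact_pow hp hAex.1 hAex.2 7
  have C1 := exact_mul hp hM3.1 hM3.2 E2.1 E2.2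
  have C2 := exact_mul hp C1.1 C1.2 E4.1 E4.2
  have C3 := exact_mul hp C2.1 C2.2 E7.1 E7.2
  exact C3.2 ((pow_dvd_pow 2 (by clear * - hmf hm3; omega)).trans (hD.trans hdvd))

set_option maxHeartbeats 1000000 in
theorem stmt (n M : ℤ) (hn : 3 ≤ n) (hM : 0 < M)
    (A : ℤ) (hA : A = 6*M - n*(n+1)*(n+5))
    (R : ℤ) (hR : R = 2^14*3^6*M^6 - 2^13*3^7*n*(n+1)*(n+3)*M^5 + 2^9*3^5*n^2*(n+1)*(n^4+93*n^3+629*n^2+1339*n+818)*M^4 - 2^7*3^4*n^3*(n+1)^2*(13*n^5+436*n^4+3688*n^3+12782*n^2+19163*n+9998)*M^3 + 2^2*3^3*n^4*(n+1)^3*(n+2)*(n+7)^2*(5*n^4+447*n^3+3303*n^2+7873*n+5652)*M^2 - 2^2*3^3*n^5*(n+1)^4*(n+2)^2*(n+5)^2*(n+7)^3*(3*n+5)*M + n^6*(n+1)^5*(n+2)^3*(n+5)^3*(n+7)^4)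
    (hint : ∃ k : ℤ, k ≠ 0 ∧
      ((M^3*(n-1)^2*(n+4)^4*A^7 : ℚ) / (54*n^4*(n+1)^2*R) = (k : ℚ))) (hgcd3 : Int.gcd n 3 = 1) (heven : Even n)
    (hv2 : padicValInt 2 n ≠ 2 ∧ padicValInt 2 n ≠ 1 + padicValInt 2 M) :
    n ∣ M := by
  obtain ⟨k, hk0, hk⟩ := hint
  -- extract the integer divisibility
  have key : (M^3*(n-1)^2*(n+4)^4*A^7 : ℤ) = (54*n^4*(n+1)^2*R) * k := by
    have hD : ((54*n^4*(n+1)^2*R : ℚ)) ≠ 0 := by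
      intro h
      rw [h, div_zero] at hk
      exact hk0 (by exact_mod_cast hk.symm)
    have h2 := (div_eq_iff hD).mp hk
    have h3 : ((M^3*(n-1)^2*(n+4)^4*A^7 : ℤ) : ℚ) = (((54*n^4*(n+1)^2*R) * k : ℤ) : ℚ) := by
      push_cast
      rw [h2]; ring
    exact_mod_cast h3
  have hdvd : (54*n^4*(n+1)^2*R : ℤ) ∣ M^3*(n-1)^2*(n+4)^4*A^7 := ⟨k, key⟩
  -- reduce to prime valuations
  have hn0 : n.natAbs ≠ 0 := Int.natAbs_ne_zero.mpr (by clear * - hn hM; omega)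
  have hM0 : M.natAbs ≠ 0 := Int.natAbs_ne_zero.mpr (by clear * - hn hM; omega)
  rw [← Int.natAbs_dvd_natAbs, ← Nat.factorization_le_iff_dvd hn0 hM0, Finsupp.le_def]
  intro p
  by_cases hp : p.Prime
  swap
  · rw [Nat.factorization_eq_zero_of_not_prime _ hp]; exact Nat.zero_le _
  haveI : Fact p.Prime := ⟨hp⟩
  rw [Nat.factorization_def _ hp, Nat.factorization_def _ hp]
  by_contra hlt
  push_neg at hlt
  have hfM : (p:ℤ)^(padicValNat p M.natAbs) ∣ M := by
    have h := padicValInt_dvd (p := p) M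
    simpa [padicValInt] using h
  have hfM' : ¬ (p:ℤ)^(padicValNat p M.natAbs + 1) ∣ M := by
    intro h
    rcases (padicValInt_dvd_iff _ M).mp h with h0 | hle
    · exact absurd h0 (by omega)
    · simp only [padicValInt] at hle; clear * - hle; omega
  have hen : (p:ℤ)^(padicValNat p n.natAbs) ∣ n := by
    have h := padicValInt_dvd (p := p) n
    simpa [padicValInt] using h
  have hpn1 : (p:ℤ)^(padicValNat p M.natAbs + 1) ∣ n :=
    (pow_dvd_pow _ (by clear * - hlt; omega)).trans hen
  by_cases hp2 : p = 2
  · subst hp2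
    obtain ⟨hv1, hv2'⟩ := hv2
    simp only [padicValInt] at hv1 hv2'
    have hc2 : ((2:ℕ):ℤ) = (2:ℤ) := by norm_num
    rw [hc2] at hfM hfM' hen
    exact case_two (m := padicValNat 2 n.natAbs) (by clear * - hv1 hv2' hlt; omega) (by clear * - hv1 hv2' hlt; omega) hfM hfM' hen hA hR hdvd
  · have hp3 : p ≠ 3 := by
      rintro rfl
      have hdn : ((3:ℕ):ℤ) ∣ n := (dvd_pow_self _ (Nat.succ_ne_zero _)).trans hpn1
      have h3 : (3:ℕ) ∣ n.natAbs := Int.natCast_dvd.mp hdn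
      have hg : (3:ℕ) ∣ Int.gcd n 3 := Nat.dvd_gcd h3 (by norm_num [Int.natAbs])
      rw [hgcd3] at hg
      clear * - hg; omega
    have hp6 : ¬ ((p:ℤ)) ∣ 6 := by
      intro h
      have h' : p ∣ 6 := by exact_mod_cast h
      have hle := Nat.le_of_dvd (by norm_num) h'
      have h2le := hp.two_le
      interval_cases p
      · exact hp2 rfl
      · exact hp3 rfl
      · exact absurd hp (by decide)
      · exact absurd h' (by decide)
      · exact absurd hp (by decide)
    exact case_odd (Nat.prime_iff_prime_int.mp hp) hp6 hfM hfM' hpn1 hA hR hdvd
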